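/- (Faulty own predecessor.) Let H be a hardware clock, let W be a nonempty finite index set with pulse times (t_w)_{w∈W} and reception times r_w ∈ [t_w + d − u, t_w + d], and set t_min := min_{w∈W} t_w, t_max := max_{w∈W} t_w, H_min := min_{w∈W} H(r_w), H_max := max_{w∈W} H(r_w). Let H_own be an arbitrary real (the faulty predecessor's message may arrive at any local time), let C be the algorithm correction computed from (H_own, H_min, H_max), and let t_pulse be the unique real with H(t_pulse) = H_own + Λ − d − C. Then t_min + Λ − 2κ ≤ t_pulse ≤ t_max + Λ + 2κ. -/

import Mathlib

/-!
The correction `C` is chosen so that `H_own - C` lies within `3κ/2` of the window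
`[H_min, H_max]` of correct reception readings: `Δ + κ/2` is pinched between `H_own - H_max`
(as `4sκ ≥ 0`) and `H_own - H_min` (take `s = 0`), and each of the three clauses of `C` loses at
most another `κ`. Hence `H(t_pulse)` is at most `Λ - d + 3κ/2` above `H(r_max)` and at least
`Λ - d - 3κ/2` above `H(r_min)`. Since the clock runs at rate between `1` and `ϑ`, these
readings translate into real times, and the reception bounds `r_w ∈ [t_w + d - u, t_w + d]`
turn them into the claimed window around `t_min + Λ` and `t_max + Λ`.
-/

def IsHardwareClock (ϑ : ℝ) (H : ℝ → ℝ) : Prop :=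
  ∀ t t' : ℝ, t ≤ t' → t' - t ≤ H t' - H t ∧ H t' - H t ≤ ϑ * (t' - t)

namespace IsHardwareClock

variable {ϑ : ℝ} {H : ℝ → ℝ}

theorem sub_le_of_sub_le (hH : IsHardwareClock ϑ H) {t t' b : ℝ} (hb : 0 ≤ b)
    (h : H t' - H t ≤ b) : t' - t ≤ b := by
  rcases le_total t t' with htt' | htt'
  · linarith [(hH t t' htt').1]
  · linarith

theorem le_sub_of_le_sub (hH : IsHardwareClock ϑ H) (hϑ : 0 < ϑ) {t t' a c : ℝ}
    (hca : c ≤ a) (hϑca : ϑ * c ≤ a) (h : a ≤ H t' - H t) : c ≤ t' - t := by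
  rcases le_or_gt t t' with htt' | htt'
  · exact le_of_mul_le_mul_left (by linarith [(hH t t' htt').2]) hϑ
  · linarith [(hH t' t htt'.le).1]

end IsHardwareClock

theorem le_and_le_of_isLeast_max {a b m : ℝ} {f : ℕ → ℝ} (hab : a ≤ b)
    (hf : ∀ s, 0 ≤ f s) (hf0 : f 0 = 0)
    (hm : IsLeast {x : ℝ | ∃ s : ℕ, x = max (a + f s) (b - f s)} m) : a ≤ m ∧ m ≤ b := by
  obtain ⟨⟨s, rfl⟩, hleast⟩ := hm
  refine ⟨le_max_of_le_left (le_add_of_nonneg_right (hf s)), hleast ⟨0, ?_⟩⟩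
  rw [hf0, add_zero, sub_zero, max_eq_right hab]

theorem correction_mem_Icc {A B Δ C κ T : ℝ} (hAB : A ≤ B) (hκ : 0 ≤ κ)
    (hΔA : A ≤ Δ + κ/2) (hΔB : Δ + κ/2 ≤ B)
    (hC1 : 0 ≤ Δ → Δ ≤ T → C = Δ)
    (hC2 : Δ < 0 → C = min (B + 3*κ/2) 0)
    (hC3 : T < Δ → C = max (A - 3*κ/2) T) :
    A - 3*κ/2 ≤ C ∧ C ≤ B + 3*κ/2 := by
  rcases lt_or_ge Δ 0 with hneg | hnonneg
  · rw [hC2 hneg]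
    exact ⟨le_min (by linarith) (by linarith), min_le_left _ _⟩
  rcases le_or_gt Δ T with hle | hgt
  · rw [hC1 hnonneg hle]
    constructor <;> linarith
  · rw [hC3 hgt]
    exact ⟨le_max_left _ _, max_le (by linarith) (by linarith)⟩

section Kappa

variable {ϑ u d Λ κ : ℝ}

theorem kappa_nonneg (hϑ : 1 < ϑ) (hu : 0 ≤ u) (hΛ : d < Λ)
    (hκ : κ = 2 * (u + (1 - 1/ϑ) * (Λ - d))) : 0 ≤ κ := by
  have : 0 ≤ 1 - 1/ϑ := sub_nonneg.mpr (div_le_one_of_le₀ hϑ.le (by linarith))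
  rw [hκ]
  have := mul_nonneg this (sub_nonneg.mpr hΛ.le)
  linarith

/-- The second inequality amounts to `0 ≤ 3(ϑ - 1)² (Λ - d) / ϑ + 3(ϑ - 1) u`. -/
theorem lower_margin (hϑ : 1 < ϑ) (hu : 0 ≤ u) (hΛ : d < Λ)
    (hκ : κ = 2 * (u + (1 - 1/ϑ) * (Λ - d))) :
    Λ - d + u - 2*κ ≤ Λ - d - 3*κ/2 ∧ ϑ * (Λ - d + u - 2*κ) ≤ Λ - d - 3*κ/2 := by
  have hϑ0 : 0 < ϑ := by linarith
  have hϑκ : ϑ * κ = 2*ϑ*u + 2*(ϑ - 1)*(Λ - d) := by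
    rw [hκ]; field_simp
  constructor
  · nlinarith [kappa_nonneg hϑ hu hΛ hκ]
  · nlinarith [mul_nonneg (sub_nonneg.mpr hϑ.le) hu,
      mul_nonneg (mul_nonneg (sub_nonneg.mpr hϑ.le) (sub_nonneg.mpr hϑ.le)) (sub_nonneg.mpr hΛ.le)]

end Kappa

theorem stmt14_general
    (ϑ u d Λ κ : ℝ)
    (hϑ : 1 < ϑ) (hu : 0 ≤ u) (hΛ : d < Λ)
    (hκ : κ = 2 * (u + (1 - 1/ϑ) * (Λ - d)))
    (H : ℝ → ℝ)
    (hH : ∀ t t' : ℝ, t ≤ t' → t' - t ≤ H t' - H t ∧ H t' - H t ≤ ϑ * (t' - t))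
    {ι : Type*} [Fintype ι] [Nonempty ι]
    (tw r : ι → ℝ)
    (hr : ∀ w : ι, tw w + d - u ≤ r w ∧ r w ≤ tw w + d)
    (Hown : ℝ)
    (Hmin Hmax : ℝ)
    (hHmin : Hmin = ⨅ w : ι, H (r w)) (hHmax : Hmax = ⨆ w : ι, H (r w))
    (Δ : ℝ)
    (hΔ : IsLeast {x : ℝ | ∃ s : ℕ,
      x = max (Hown - Hmax + 4*(s:ℝ)*κ) (Hown - Hmin - 4*(s:ℝ)*κ)} (Δ + κ/2))
    (C : ℝ)
    (hC1 : 0 ≤ Δ → Δ ≤ ϑ*κ → C = Δ)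
    (hC2 : Δ < 0 → C = min (Hown - Hmin + 3*κ/2) 0)
    (hC3 : ϑ*κ < Δ → C = max (Hown - Hmax - 3*κ/2) (ϑ*κ))
    (tpulse : ℝ) (hpulse : H tpulse = Hown + Λ - d - C) :
    (⨅ w : ι, tw w) + Λ - 2*κ ≤ tpulse ∧ tpulse ≤ (⨆ w : ι, tw w) + Λ + 2*κ := by
  have hclock : IsHardwareClock ϑ H := hH
  have hκ0 := kappa_nonneg hϑ hu hΛ hκ
  obtain ⟨vmin, hvmin⟩ := exists_eq_ciInf_of_finite (f := fun w => H (r w))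
  obtain ⟨vmax, hvmax⟩ := exists_eq_ciSup_of_finite (f := fun w => H (r w))
  have hHle : Hmin ≤ Hmax := hHmin ▸ hHmax ▸
    ciInf_le_ciSup (Finite.bddBelow_range _) (Finite.bddAbove_range _)
  obtain ⟨hΔlo, hΔhi⟩ := le_and_le_of_isLeast_max (f := fun s : ℕ => 4 * (s:ℝ) * κ)
    (by linarith) (fun s => by positivity) (by simp) hΔ
  obtain ⟨hClo, hChi⟩ := correction_mem_Icc (by linarith) hκ0 hΔlo hΔhi hC1 hC2 hC3
  have htmin : (⨅ w, tw w) ≤ tw vmin := ciInf_le (Finite.bddBelow_range _) vmin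
  have htmax : tw vmax ≤ ⨆ w, tw w := le_ciSup (Finite.bddAbove_range _) vmax
  obtain ⟨hmargin, hϑmargin⟩ := lower_margin hϑ hu hΛ hκ
  have hlow := hclock.le_sub_of_le_sub (t := r vmin) (t' := tpulse) (by linarith) hmargin hϑmargin
    (by linarith)
  have hup := hclock.sub_le_of_sub_le (t := r vmax) (t' := tpulse)
    (b := Λ - d + 3*κ/2) (by linarith) (by linarith)
  constructor <;> linarith [hr vmin, hr vmax]

/-- Lemma `fault_self`: the own predecessor is faulty, all
neighbouring predecessors (indexed by the nonempty finite type `ι`) are correct. -/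
theorem stmt14
    (ϑ u d Λ κ : ℝ)
    (hϑ : 1 < ϑ) (hu : 0 ≤ u) (hd : u ≤ d) (hΛ : d < Λ)
    (hκ : κ = 2 * (u + (1 - 1/ϑ) * (Λ - d)))
    (H : ℝ → ℝ)
    (hH : ∀ t t' : ℝ, t ≤ t' → t' - t ≤ H t' - H t ∧ H t' - H t ≤ ϑ * (t' - t))
    {ι : Type*} [Fintype ι] [Nonempty ι]
    (tw r : ι → ℝ)
    (hr : ∀ w : ι, tw w + d - u ≤ r w ∧ r w ≤ tw w + d)
    (Hown : ℝ)
    (Hmin Hmax : ℝ)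
    (hHmin : Hmin = ⨅ w : ι, H (r w)) (hHmax : Hmax = ⨆ w : ι, H (r w))
    (Δ : ℝ)
    (hΔ : IsLeast {x : ℝ | ∃ s : ℕ,
      x = max (Hown - Hmax + 4*(s:ℝ)*κ) (Hown - Hmin - 4*(s:ℝ)*κ)} (Δ + κ/2))
    (C : ℝ)
    (hC1 : 0 ≤ Δ → Δ ≤ ϑ*κ → C = Δ)
    (hC2 : Δ < 0 → C = min (Hown - Hmin + 3*κ/2) 0)
    (hC3 : ϑ*κ < Δ → C = max (Hown - Hmax - 3*κ/2) (ϑ*κ))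
    (tpulse : ℝ) (hpulse : H tpulse = Hown + Λ - d - C) :
    (⨅ w : ι, tw w) + Λ - 2*κ ≤ tpulse ∧ tpulse ≤ (⨆ w : ι, tw w) + Λ + 2*κ :=
  stmt14_general ϑ u d Λ κ hϑ hu hΛ hκ H hH tw r hr Hown Hmin Hmax hHmin hHmax Δ hΔ C hC1 hC2 hC3
    tpulse hpulse
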